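/- arXiv:1901.08215 — 2 statements merged into one kernel-verified Lean document; each statement's English description precedes it below -/
import Mathlib

section
/- Let f : ℝ^m → ℝ be differentiable with β-Lipschitz continuous gradient (β > 0). Then for every η > 0 and every x, ε ∈ ℝ^m, f(x − η∇f(x) + ε) ≤ f(x) − η(1/2 − ηβ)‖∇f(x)‖₂² + (2/η + β)‖ε‖₂². -/
open intervalIntegral in
lemma descent_lemma {m : ℕ} (f : EuclideanSpace ℝ (Fin m) → ℝ)
    (β : ℝ) (hβ : 0 < β)
    (hdiff : Differentiable ℝ f)
    (hlip : ∀ x y : EuclideanSpace ℝ (Fin m),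
      ‖gradient f x - gradient f y‖ ≤ β * ‖x - y‖)
    (x v : EuclideanSpace ℝ (Fin m)) :
    f (x + v) ≤ f x + inner ℝ (gradient f x) v + β / 2 * ‖v‖ ^ 2 := by
  set g := gradient f with hg
  have hgrad : ∀ z, HasGradientAt f (g z) z := fun z => (hdiff z).hasGradientAt
  -- the path
  set c : ℝ → EuclideanSpace ℝ (Fin m) := fun t => x + t • v with hc
  have hcd : ∀ t : ℝ, HasDerivAt c v t := by
    intro t
    have h0 := ((hasDerivAt_id t).smul_const v).const_add x
    rw [one_smul] at h0
    exact h0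
  set φ' : ℝ → ℝ := fun t => inner ℝ (g (c t)) v with hφ'
  have hφ : ∀ t : ℝ, HasDerivAt (fun t => f (c t)) (φ' t) t := by
    intro t
    have h1 : HasFDerivAt f ((InnerProductSpace.toDual ℝ _) (g (c t))) (c t) :=
      (hasGradientAt_iff_hasFDerivAt.mp (hgrad (c t)))
    exact (by simpa using h1.comp_hasDerivAt t (hcd t) : HasDerivAt (f ∘ c) (inner ℝ (g (c t)) v) t)
  have hgcont : Continuous g := by
    have : LipschitzWith ⟨β, hβ.le⟩ g := by
      intro a b
      rw [edist_dist, edist_dist, dist_eq_norm, dist_eq_norm]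
      exact_mod_cast (ENNReal.ofReal_le_ofReal (hlip a b)).trans_eq (by
        rw [ENNReal.ofReal_mul hβ.le]; norm_cast <;> simp [ENNReal.ofReal,
          Real.toNNReal_of_nonneg hβ.le, Real.toNNReal_of_nonneg (norm_nonneg _)] <;> rfl)
    exact this.continuous
  have hφ'cont : Continuous φ' := by
    apply Continuous.inner (hgcont.comp (by continuity)) continuous_const
  have hint : IntervalIntegrable φ' MeasureTheory.volume 0 1 :=
    hφ'cont.intervalIntegrable 0 1
  have hftc : ∫ t in (0:ℝ)..1, φ' t = f (c 1) - f (c 0) :=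
    integral_eq_sub_of_hasDerivAt (fun t _ => hφ t) hint
  have hbound : ∀ t ∈ Set.Icc (0:ℝ) 1, φ' t ≤ inner ℝ (g x) v + β * t * ‖v‖ ^ 2 := by
    intro t ht
    have h1 : φ' t - inner ℝ (g x) v = inner ℝ (g (c t) - g x) v := by
      simp [hφ', inner_sub_left]
    have h2 : inner ℝ (g (c t) - g x) v ≤ ‖g (c t) - g x‖ * ‖v‖ :=
      real_inner_le_norm _ _
    have h3 : ‖g (c t) - g x‖ ≤ β * (t * ‖v‖) := by
      have := hlip (c t) x
      simpa [hc, norm_smul, abs_of_nonneg ht.1] using this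
    nlinarith [norm_nonneg v, norm_nonneg (g (c t) - g x)]
  have hmono : ∫ t in (0:ℝ)..1, φ' t ≤
      ∫ t in (0:ℝ)..1, (inner ℝ (g x) v + β * t * ‖v‖ ^ 2) := by
    apply integral_mono_on zero_le_one hint
    · exact (continuous_const.add ((continuous_const.mul continuous_id).mul
        continuous_const)).intervalIntegrable _ _
    · exact hbound
  have hval : ∫ t in (0:ℝ)..1, (inner ℝ (g x) v + β * t * ‖v‖ ^ 2)
      = inner ℝ (g x) v + β / 2 * ‖v‖ ^ 2 := by
    rw [integral_add intervalIntegrable_const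
      ((by fun_prop : Continuous fun t : ℝ => β * t * ‖v‖ ^ 2).intervalIntegrable _ _)]
    have h2 : ∫ t in (0:ℝ)..1, β * t * ‖v‖ ^ 2
        = (β * ‖v‖ ^ 2) * ∫ t in (0:ℝ)..1, t := by
      rw [← integral_const_mul]; congr 1; ext t; ring
    rw [h2, integral_id, integral_const]
    simp; ring
  have hfin : f (c 1) - f (c 0) ≤ inner ℝ (g x) v + β / 2 * ‖v‖ ^ 2 := by
    rw [← hftc]; rw [hval] at hmono; exact hmono
  have hc0 : c 0 = x := by simp [hc]
  have hc1 : c 1 = x + v := by simp [hc]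
  rw [hc0, hc1] at hfin
  linarith

/-- **Descent inequality for a perturbed gradient step.**
If `f` is differentiable with `β`-Lipschitz gradient (`β > 0`), then for every
stepsize `η > 0` and every `x, ε`,
`f(x − η∇f(x) + ε) ≤ f(x) − η(1/2 − ηβ)‖∇f(x)‖² + (2/η + β)‖ε‖²`. -/
theorem perturbed_gradient_step_descent {m : ℕ} (f : EuclideanSpace ℝ (Fin m) → ℝ)
    (β : ℝ) (hβ : 0 < β)
    (hdiff : Differentiable ℝ f)
    (hlip : ∀ x y : EuclideanSpace ℝ (Fin m),
      ‖gradient f x - gradient f y‖ ≤ β * ‖x - y‖) :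
    ∀ (η : ℝ), 0 < η → ∀ x ε : EuclideanSpace ℝ (Fin m),
      f (x - η • gradient f x + ε)
        ≤ f x - η * (1 / 2 - η * β) * ‖gradient f x‖ ^ 2 + (2 / η + β) * ‖ε‖ ^ 2 := by
  intro η hη x ε
  set g := gradient f x with hg
  have key := descent_lemma f β hβ hdiff hlip x (ε - η • g)
  have heq : x + (ε - η • g) = x - η • g + ε := by abel
  rw [heq] at key
  have hinner : inner ℝ g (ε - η • g) = (inner ℝ g ε : ℝ) - η * ‖g‖ ^ 2 := by
    rw [inner_sub_right, real_inner_smul_right, real_inner_self_eq_norm_sq]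
  have hnorm : ‖ε - η • g‖ ≤ ‖ε‖ + η * ‖g‖ := by
    calc ‖ε - η • g‖ ≤ ‖ε‖ + ‖η • g‖ := norm_sub_le _ _
    _ = ‖ε‖ + η * ‖g‖ := by rw [norm_smul, Real.norm_of_nonneg hη.le]
  have hnorm2 : ‖ε - η • g‖ ^ 2 ≤ (‖ε‖ + η * ‖g‖) ^ 2 :=
    pow_le_pow_left₀ (norm_nonneg _) hnorm 2
  have hie : (inner ℝ g ε : ℝ) ≤ ‖g‖ * ‖ε‖ := real_inner_le_norm g ε
  have hamgm : ‖g‖ * ‖ε‖ ≤ η / 2 * ‖g‖ ^ 2 + 1 / (2 * η) * ‖ε‖ ^ 2 := by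
    have key2 : 2 * η * (‖g‖ * ‖ε‖)
        ≤ 2 * η * (η / 2 * ‖g‖ ^ 2 + 1 / (2 * η) * ‖ε‖ ^ 2) := by
      have hη2 : 2 * η * (1 / (2 * η)) = 1 := by field_simp
      nlinarith [sq_nonneg (η * ‖g‖ - ‖ε‖)]
    exact (mul_le_mul_iff_of_pos_left (by positivity : (0:ℝ) < 2 * η)).mp key2
  have h2η : 1 / (2 * η) ≤ 2 / η := by
    rw [div_le_div_iff₀ (by positivity) hη]; nlinarith
  rw [hinner] at key
  nlinarith [sq_nonneg (‖ε‖ - η * ‖g‖), sq_nonneg ‖ε‖, sq_nonneg ‖g‖,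
    mul_pos hη hβ, sq_nonneg (η * ‖g‖), norm_nonneg ε, norm_nonneg g,
    mul_le_mul_of_nonneg_left hnorm2 (by positivity : (0:ℝ) ≤ β / 2)]
end

section
/- Let {A(k)}_{k∈ℕ} be a sequence of n×n row-stochastic real matrices, let B ≥ 1 be an integer and θ ∈ (0, 1], and suppose that for every k ∈ ℕ every entry of Φ_B(k) = A(k+B−1)···A(k) is at least θ. Then for every k ∈ ℕ there exists a stochastic vector φ(k) ∈ ℝ^n such that the backward product Φ_t(k) = A(k+t−1)···A(k) converges, as t → ∞, to the rank-one matrix 1·φ(k)ᵀ (i.e., every row of Φ_t(k) converges to the same stochastic vector φ(k)). -/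
def backProd {n : ℕ} (A : ℕ → Matrix (Fin n) (Fin n) ℝ) : ℕ → ℕ → Matrix (Fin n) (Fin n) ℝ
  | 0, _ => 1
  | t + 1, k => A (k + t) * backProd A t k

open Finset Filter

lemma backProd_add {n : ℕ} (A : ℕ → Matrix (Fin n) (Fin n) ℝ) (s t k : ℕ) :
    backProd A (s + t) k = backProd A s (k + t) * backProd A t k := by
  induction s with
  | zero => simp [backProd]
  | succ s ih =>
      have h1 : s + 1 + t = (s + t) + 1 := by omega
      rw [h1]
      show A (k + (s + t)) * backProd A (s + t) k = _
      rw [show k + (s + t) = k + t + s from by omega, ih]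
      show _ = A (k + t + s) * backProd A s (k + t) * backProd A t k
      rw [← mul_assoc]

lemma backProd_nonneg {n : ℕ} (A : ℕ → Matrix (Fin n) (Fin n) ℝ)
    (hA : ∀ k i j, 0 ≤ A k i j) : ∀ t k i j, 0 ≤ backProd A t k i j := by
  intro t
  induction t with
  | zero =>
      intro k i j
      simp only [backProd, Matrix.one_apply]
      split <;> norm_num
  | succ t ih =>
      intro k i j
      show 0 ≤ (A (k + t) * backProd A t k) i j
      rw [Matrix.mul_apply]
      exact Finset.sum_nonneg fun l _ => mul_nonneg (hA _ _ _) (ih k l j)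

lemma backProd_rowsum {n : ℕ} (A : ℕ → Matrix (Fin n) (Fin n) ℝ)
    (hrow : ∀ k i, ∑ j, A k i j = 1) : ∀ t k i, ∑ j, backProd A t k i j = 1 := by
  intro t
  induction t with
  | zero =>
      intro k i
      simp [backProd, Matrix.one_apply]
  | succ t ih =>
      intro k i
      show ∑ j, (A (k + t) * backProd A t k) i j = 1
      simp only [Matrix.mul_apply]
      rw [Finset.sum_comm]
      calc ∑ l, ∑ j, A (k + t) i l * backProd A t k l j
          = ∑ l, A (k + t) i l * ∑ j, backProd A t k l j := by
            simp [Finset.mul_sum]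
        _ = 1 := by simp only [ih k]; simpa using hrow (k + t) i

lemma dot_le {n : ℕ} (hne : (univ : Finset (Fin n)).Nonempty) (θ : ℝ) (hθ : 0 ≤ θ)
    (w x : Fin n → ℝ) (hθw : ∀ l, θ ≤ w l) (hw0 : ∀ l, 0 ≤ w l) (hw1 : ∑ l, w l = 1) :
    ∑ l, w l * x l ≤
      univ.sup' hne x - θ * (univ.sup' hne x - univ.inf' hne x) := by
  set M := univ.sup' hne x with hM
  set m := univ.inf' hne x with hm
  obtain ⟨j0, -, hj0⟩ := Finset.exists_mem_eq_inf' hne x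
  have hmM : m ≤ M := by
    obtain ⟨i0⟩ := hne
    exact le_trans (Finset.inf'_le x (mem_univ i0)) (Finset.le_sup' x (mem_univ i0))
  have hsplit : ∑ l, w l * x l
      = ∑ l ∈ univ.erase j0, w l * x l + w j0 * x j0 :=
    (Finset.sum_erase_add _ _ (mem_univ j0)).symm
  have h2 : ∑ l ∈ univ.erase j0, w l * x l ≤ ∑ l ∈ univ.erase j0, w l * M :=
    Finset.sum_le_sum fun l _ =>
      mul_le_mul_of_nonneg_left (Finset.le_sup' x (mem_univ l)) (hw0 l)
  have h3 : ∑ l ∈ univ.erase j0, w l = 1 - w j0 := by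
    have := Finset.sum_erase_add univ w (mem_univ j0)
    linarith [hw1 ▸ this]
  have h4 : ∑ l ∈ univ.erase j0, w l * M = (1 - w j0) * M := by
    rw [← Finset.sum_mul, h3]
  have hwj0 : θ ≤ w j0 := hθw j0
  have hxj0 : x j0 = m := hj0.symm
  nlinarith [hsplit, h2, h4]

lemma dot_ge {n : ℕ} (hne : (univ : Finset (Fin n)).Nonempty) (θ : ℝ) (hθ : 0 ≤ θ)
    (w x : Fin n → ℝ) (hθw : ∀ l, θ ≤ w l) (hw0 : ∀ l, 0 ≤ w l) (hw1 : ∑ l, w l = 1) :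
    univ.inf' hne x + θ * (univ.sup' hne x - univ.inf' hne x) ≤
      ∑ l, w l * x l := by
  set M := univ.sup' hne x with hM
  set m := univ.inf' hne x with hm
  obtain ⟨j0, -, hj0⟩ := Finset.exists_mem_eq_sup' hne x
  have hmM : m ≤ M := by
    obtain ⟨i0⟩ := hne
    exact le_trans (Finset.inf'_le x (mem_univ i0)) (Finset.le_sup' x (mem_univ i0))
  have hsplit : ∑ l, w l * x l
      = ∑ l ∈ univ.erase j0, w l * x l + w j0 * x j0 :=
    (Finset.sum_erase_add _ _ (mem_univ j0)).symm
  have h2 : ∑ l ∈ univ.erase j0, w l * m ≤ ∑ l ∈ univ.erase j0, w l * x l :=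
    Finset.sum_le_sum fun l _ =>
      mul_le_mul_of_nonneg_left (Finset.inf'_le x (mem_univ l)) (hw0 l)
  have h3 : ∑ l ∈ univ.erase j0, w l = 1 - w j0 := by
    have := Finset.sum_erase_add univ w (mem_univ j0)
    linarith [hw1 ▸ this]
  have h4 : ∑ l ∈ univ.erase j0, w l * m = (1 - w j0) * m := by
    rw [← Finset.sum_mul, h3]
  have hwj0 : θ ≤ w j0 := hθw j0
  have hxj0 : x j0 = M := hj0.symm
  nlinarith [hsplit, h2, h4]

/-- **Ergodicity of inhomogeneous products of row-stochastic matrices (underlying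
Lemma 2 of the paper).** Let `{A(k)}` be row-stochastic matrices such that every entry
of every length-`B` backward product `Φ_B(k)` is at least `θ ∈ (0,1]`. Then for every
`k` there exists a stochastic vector `φ(k)` such that the backward products `Φ_t(k)`
converge, as `t → ∞`, to the rank-one matrix `1·φ(k)ᵀ` (every row converges to the
same stochastic vector `φ(k)`). -/
theorem row_stochastic_backProd_converges (n : ℕ) (hn : 0 < n)
    (A : ℕ → Matrix (Fin n) (Fin n) ℝ)
    (hnonneg : ∀ k i j, 0 ≤ A k i j)
    (hrow : ∀ k i, ∑ j, A k i j = 1)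
    (B : ℕ) (hB : 1 ≤ B) (θ : ℝ) (hθ0 : 0 < θ) (hθ1 : θ ≤ 1)
    (hpos : ∀ k i j, θ ≤ backProd A B k i j) :
    ∀ k : ℕ, ∃ φ : Fin n → ℝ, (∀ i, 0 ≤ φ i) ∧ (∑ i, φ i = 1) ∧
      Filter.Tendsto (fun t => backProd A t k) Filter.atTop
        (nhds (Matrix.of fun _ j => φ j)) := by
  intro k
  have i0 : Fin n := ⟨0, hn⟩
  have hne : (univ : Finset (Fin n)).Nonempty := ⟨i0, mem_univ _⟩
  have hP0 := backProd_nonneg A hnonneg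
  have hP1 := backProd_rowsum A hrow
  set f : Fin n → ℕ → ℝ := fun j t => univ.inf' hne (fun i => backProd A t k i j) with hf
  set g : Fin n → ℕ → ℝ := fun j t => univ.sup' hne (fun i => backProd A t k i j) with hg
  have hfl : ∀ j t i, f j t ≤ backProd A t k i j := fun j t i =>
    Finset.inf'_le (fun i => backProd A t k i j) (mem_univ i)
  have hgu : ∀ j t i, backProd A t k i j ≤ g j t := fun j t i =>
    Finset.le_sup' (fun i => backProd A t k i j) (mem_univ i)
  have hfg : ∀ j t, f j t ≤ g j t := fun j t => le_trans (hfl j t i0) (hgu j t i0)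
  -- key contraction / monotonicity step
  have key : ∀ (s t : ℕ) (θ' : ℝ), 0 ≤ θ' → (∀ i l, θ' ≤ backProd A s (k + t) i l) →
      ∀ j, g j (s + t) ≤ g j t - θ' * (g j t - f j t) ∧
        f j t + θ' * (g j t - f j t) ≤ f j (s + t) := by
    intro s t θ' hθ' hθ'row j
    have hcol : ∀ i, backProd A (s + t) k i j
        = ∑ l, backProd A s (k + t) i l * backProd A t k l j := by
      intro i
      rw [backProd_add, Matrix.mul_apply]
    constructor
    · apply Finset.sup'_le
      intro i _
      rw [hcol i]
      exact dot_le hne θ' hθ' _ _ (fun l => hθ'row i l) (fun l => hP0 s (k + t) i l)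
        (hP1 s (k + t) i)
    · apply Finset.le_inf'
      intro i _
      rw [hcol i]
      exact dot_ge hne θ' hθ' _ _ (fun l => hθ'row i l) (fun l => hP0 s (k + t) i l)
        (hP1 s (k + t) i)
  have hfmono : ∀ j, Monotone (f j) := by
    intro j
    apply monotone_nat_of_le_succ
    intro t
    have := (key 1 t 0 le_rfl (fun i l => hP0 1 (k + t) i l) j).2
    simpa [Nat.add_comm] using this
  have hganti : ∀ j, Antitone (g j) := by
    intro j
    apply antitone_nat_of_succ_le
    intro t
    have := (key 1 t 0 le_rfl (fun i l => hP0 1 (k + t) i l) j).1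
    simpa [Nat.add_comm] using this
  set φ : Fin n → ℝ := fun j => ⨆ t, f j t with hφ
  have hconv : ∀ i j, Filter.Tendsto (fun t => backProd A t k i j)
      Filter.atTop (nhds (φ j)) := by
    intro i j
    have hbddf : BddAbove (Set.range (f j)) := by
      refine ⟨g j 0, ?_⟩
      rintro _ ⟨t, rfl⟩
      exact (hfg j t).trans (hganti j (Nat.zero_le t))
    have hbddg : BddBelow (Set.range (g j)) := by
      refine ⟨f j 0, ?_⟩
      rintro _ ⟨t, rfl⟩
      exact (hfmono j (Nat.zero_le t)).trans (hfg j t)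
    have htf : Filter.Tendsto (f j) Filter.atTop (nhds (φ j)) :=
      tendsto_atTop_ciSup (hfmono j) hbddf
    set L : ℝ := ⨅ t, g j t with hL
    have htg : Filter.Tendsto (g j) Filter.atTop (nhds L) :=
      tendsto_atTop_ciInf (hganti j) hbddg
    have hφL : φ j ≤ L := le_of_tendsto_of_tendsto' htf htg (hfg j)
    -- contraction along B-blocks
    have hcontr : ∀ t, g j (B + t) - f j (B + t) ≤ (1 - 2 * θ) * (g j t - f j t) := by
      intro t
      have h := key B t θ hθ0.le (fun i l => hpos (k + t) i l) j
      nlinarith [h.1, h.2]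
    have ht1 : Filter.Tendsto (fun t => g j (B + t) - f j (B + t))
        Filter.atTop (nhds (L - φ j)) := by
      have := (htg.sub htf).comp (Filter.tendsto_add_atTop_nat B)
      simpa [Function.comp_def, Nat.add_comm] using this
    have ht2 : Filter.Tendsto (fun t => (1 - 2 * θ) * (g j t - f j t))
        Filter.atTop (nhds ((1 - 2 * θ) * (L - φ j))) :=
      (htg.sub htf).const_mul _
    have hkey : L - φ j ≤ (1 - 2 * θ) * (L - φ j) :=
      le_of_tendsto_of_tendsto' ht1 ht2 hcontr
    have hLφ : L = φ j := by nlinarith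
    exact tendsto_of_tendsto_of_tendsto_of_le_of_le htf (hLφ ▸ htg)
      (fun t => hfl j t i) (fun t => hgu j t i)
  refine ⟨φ, ?_, ?_, ?_⟩
  · intro j
    exact ge_of_tendsto (hconv i0 j)
      (Filter.Eventually.of_forall fun t => hP0 t k i0 j)
  · have hs : Filter.Tendsto (fun t => ∑ j, backProd A t k i0 j)
        Filter.atTop (nhds (∑ j, φ j)) :=
      tendsto_finset_sum univ fun j _ => hconv i0 j
    have hc : Filter.Tendsto (fun t => ∑ j, backProd A t k i0 j)
        Filter.atTop (nhds 1) := by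
      simpa [hP1 _ k] using (tendsto_const_nhds :
        Filter.Tendsto (fun _ : ℕ => (1 : ℝ)) Filter.atTop (nhds 1))
    exact (tendsto_nhds_unique hs hc)
  · refine tendsto_pi_nhds.2 ?_
    intro i
    rw [tendsto_pi_nhds]
    intro j
    simp only [Matrix.of_apply]
    exact hconv i j
end
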